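/- arXiv:2503.22062 — 9 statements merged into one kernel-verified Lean document; each statement's English description precedes it below -/
import Mathlib

section
/- Let J : ℝ → ℝ be continuous, nonnegative, compactly supported, with J(0) > 0 and ∫_ℝ J = 1. Then for every c ∈ ℝ the function η(ν) = ∫_ℝ J(x) e^{-ν x} dx + c ν is strictly convex on ℝ; in fact there exist δ ∈ (0, 1/2) and σ > 0 such that η''(ν) = ∫_ℝ J(x) x² e^{-ν x} dx ≥ σ e^{δ|ν|} for all ν ∈ ℝ. -/
/-!
Under the density `J`, `η(ν) - cν` is the moment generating function of the identity at `-ν`,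
which is smooth with second derivative `∫ J(x) x² e^{-νx} dx` because the compact support of `J`
makes every exponential moment finite. For the lower bound, `J ≥ σ₀` on `[-2δ, 2δ]`, and on
whichever of `[-2δ, -δ]`, `[δ, 2δ]` has the sign opposite to `ν` the integrand is at least
`σ₀ δ² e^{δ|ν|}`.
-/

open MeasureTheory Real Filter Set ProbabilityTheory

section MomentGeneratingFunction

variable {Ω : Type*} [MeasurableSpace Ω] {X : Ω → ℝ} {μ : Measure Ω}

lemma iteratedDeriv_two_mgf_neg (h : ∀ t, Integrable (fun ω => exp (t * X ω)) μ) (ν : ℝ) :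
    iteratedDeriv 2 (fun ν => mgf X μ (-ν)) ν = ∫ ω, X ω ^ 2 * exp (-ν * X ω) ∂μ := by
  have hset : integrableExpSet X μ = univ := eq_univ_of_forall h
  rw [iteratedDeriv_comp_neg, iteratedDeriv_mgf (by simp [hset])]
  simp

lemma differentiable_mgf_neg (h : ∀ t, Integrable (fun ω => exp (t * X ω)) μ) :
    Differentiable ℝ (fun ν => mgf X μ (-ν)) := by
  have hset : integrableExpSet X μ = univ := eq_univ_of_forall h
  exact fun ν => (differentiableAt_mgf (by simp [hset])).comp ν (by fun_prop)

end MomentGeneratingFunction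

lemma iteratedDeriv_two_add_const_mul {f : ℝ → ℝ} (hf : Differentiable ℝ f) (c : ℝ) :
    iteratedDeriv 2 (fun x => f x + c * x) = iteratedDeriv 2 f := by
  have : deriv (fun x => f x + c * x) = fun x => deriv f x + c := by
    ext x
    rw [deriv_fun_add (hf x) (by fun_prop)]
    simp
  rw [iteratedDeriv_succ', iteratedDeriv_succ' (f := f), this]
  simp [iteratedDeriv_one]

lemma integral_mul_eq_integral_withDensity {J : ℝ → ℝ} (hJ : Measurable J)
    (hJnonneg : ∀ x, 0 ≤ J x) (g : ℝ → ℝ) :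
    ∫ x, J x * g x = ∫ x, g x ∂(volume.withDensity fun x => ((J x).toNNReal : ENNReal)) := by
  rw [integral_withDensity_eq_integral_smul hJ.real_toNNReal]
  simp [NNReal.smul_def, Real.coe_toNNReal _ (hJnonneg _)]

lemma integrable_exp_mul_withDensity {J : ℝ → ℝ} (hJ : Continuous J) (hJs : HasCompactSupport J)
    (t : ℝ) :
    Integrable (fun x => exp (t * x)) (volume.withDensity fun x => ((J x).toNNReal : ENNReal)) := by
  rw [integrable_withDensity_iff_integrable_smul hJ.measurable.real_toNNReal]
  refine Continuous.integrable_of_hasCompactSupport (by fun_prop) ?_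
  exact (hJs.comp_left (g := Real.toNNReal) (by simp)).smul_right

lemma exists_uniform_pos_lower_bound_near_zero {J : ℝ → ℝ} (hJ : Continuous J) (hJ0 : 0 < J 0) :
    ∃ δ, 0 < δ ∧ δ < 1 / 2 ∧ ∃ σ₀ > 0, ∀ x, |x| ≤ 2 * δ → σ₀ ≤ J x := by
  obtain ⟨r, hr, hJr⟩ := Metric.eventually_nhds_iff.mp
    ((hJ.tendsto 0).eventually (eventually_gt_nhds (half_lt_self hJ0)))
  refine ⟨min (r / 4) (1 / 4), by positivity, by linarith [min_le_right (r / 4) (1 / 4)],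
    J 0 / 2, by positivity, fun x hx => (hJr ?_).le⟩
  rw [Real.dist_eq, sub_zero]
  linarith [min_le_left (r / 4) (1 / 4)]

lemma mul_sub_le_integral_of_le_on_Icc {f : ℝ → ℝ} (hf : Integrable f) (hf0 : ∀ x, 0 ≤ f x)
    {a b m : ℝ} (hab : a ≤ b) (hm : ∀ x ∈ Icc a b, m ≤ f x) :
    m * (b - a) ≤ ∫ x, f x := by
  calc m * (b - a) = m * volume.real (Icc a b) := by simp [hab]
    _ ≤ ∫ x in Icc a b, f x :=
      setIntegral_ge_of_const_le_real measurableSet_Icc measure_Icc_lt_top.ne hm hf.integrableOn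
    _ ≤ ∫ x, f x := setIntegral_le_integral hf (ae_of_all _ hf0)

lemma exists_Icc_abs_bounds_and_mul_abs_le_neg_mul {δ : ℝ} (hδ : 0 < δ) (ν : ℝ) :
    ∃ a, ∀ x ∈ Icc a (a + δ), δ ≤ |x| ∧ |x| ≤ 2 * δ ∧ δ * |ν| ≤ -ν * x := by
  rcases le_or_gt 0 ν with hν | hν
  · refine ⟨-(2 * δ), fun x ⟨hx₁, hx₂⟩ => ?_⟩
    rw [abs_of_neg (by linarith), abs_of_nonneg hν]
    refine ⟨by linarith, by linarith, by nlinarith⟩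
  · refine ⟨δ, fun x ⟨hx₁, hx₂⟩ => ?_⟩
    rw [abs_of_pos (by linarith), abs_of_neg hν]
    refine ⟨by linarith, by linarith, by nlinarith⟩

lemma mul_exp_abs_le_integral_mul_sq_mul_exp {J : ℝ → ℝ} (hJ0 : ∀ x, 0 ≤ J x)
    (hJi : ∀ ν : ℝ, Integrable fun x => J x * x ^ 2 * exp (-ν * x))
    {δ σ₀ : ℝ} (hδ : 0 < δ) (hJδ : ∀ x, |x| ≤ 2 * δ → σ₀ ≤ J x) (ν : ℝ) :
    σ₀ * δ ^ 3 * exp (δ * |ν|) ≤ ∫ x, J x * x ^ 2 * exp (-ν * x) := by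
  obtain ⟨a, ha⟩ := exists_Icc_abs_bounds_and_mul_abs_le_neg_mul hδ ν
  have key := mul_sub_le_integral_of_le_on_Icc (hJi ν) (fun x => by have := hJ0 x; positivity)
    (by linarith : a ≤ a + δ) (m := σ₀ * δ ^ 2 * exp (δ * |ν|)) fun x hx => by
      obtain ⟨hδx, hx2δ, hνx⟩ := ha x hx
      rw [← sq_abs x]
      gcongr
      · exact mul_nonneg (hJ0 x) (sq_nonneg _)
      · exact hJ0 x
      · exact hJδ x hx2δ
  calc σ₀ * δ ^ 3 * exp (δ * |ν|) = σ₀ * δ ^ 2 * exp (δ * |ν|) * (a + δ - a) := by ring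
    _ ≤ _ := key

theorem stmt1_general (J : ℝ → ℝ) (hJcont : Continuous J) (hJnonneg : ∀ x, 0 ≤ J x)
    (hJ0 : 0 < J 0) (hJsupp : HasCompactSupport J) (c : ℝ) :
    StrictConvexOn ℝ Set.univ (fun ν : ℝ => (∫ x, J x * Real.exp (-ν * x)) + c * ν) ∧
    ∃ δ σ : ℝ, 0 < δ ∧ δ < 1/2 ∧ 0 < σ ∧ ∀ ν : ℝ,
      iteratedDeriv 2 (fun ν : ℝ => (∫ x, J x * Real.exp (-ν * x)) + c * ν) ν
        = ∫ x, J x * x ^ 2 * Real.exp (-ν * x) ∧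
      σ * Real.exp (δ * |ν|) ≤ ∫ x, J x * x ^ 2 * Real.exp (-ν * x) := by
  set μ := volume.withDensity fun x => ((J x).toNNReal : ENNReal)
  have hμ := integral_mul_eq_integral_withDensity hJcont.measurable hJnonneg
  have hexp := integrable_exp_mul_withDensity hJcont hJsupp
  have hdiff := differentiable_mgf_neg (X := id) hexp
  have hη : (fun ν : ℝ => (∫ x, J x * exp (-ν * x)) + c * ν)
      = fun ν => mgf id μ (-ν) + c * ν := by
    funext ν
    rw [hμ]
    rfl
  have hη'' : ∀ ν, iteratedDeriv 2 (fun ν : ℝ => (∫ x, J x * exp (-ν * x)) + c * ν) ν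
      = ∫ x, J x * x ^ 2 * exp (-ν * x) := fun ν => by
    rw [hη, iteratedDeriv_two_add_const_mul hdiff,
      iteratedDeriv_two_mgf_neg (X := id) hexp, ← hμ]
    simp only [id, mul_assoc]
  have hint : ∀ ν : ℝ, Integrable fun x => J x * x ^ 2 * exp (-ν * x) := fun ν =>
    (by fun_prop : Continuous _).integrable_of_hasCompactSupport hJsupp.mul_right.mul_right
  obtain ⟨δ, hδ, hδ2, σ₀, hσ₀, hJδ⟩ := exists_uniform_pos_lower_bound_near_zero hJcont hJ0
  have hbound := mul_exp_abs_le_integral_mul_sq_mul_exp hJnonneg hint hδ hJδ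
  refine ⟨strictConvexOn_univ_of_deriv2_pos ?_ fun ν => ?_,
    δ, σ₀ * δ ^ 3, hδ, hδ2, by positivity, fun ν => ⟨hη'' ν, hbound ν⟩⟩
  · rw [hη]
    exact (hdiff.add (by fun_prop)).continuous
  · rw [← iteratedDeriv_eq_iterate, hη'' ν]
    exact lt_of_lt_of_le (by positivity) (hbound ν)

/-- For compactly supported `J` satisfying (J) and any `c`, the function
`η(ν) = ∫ J(x) e^{-ν x} dx + c ν` is strictly convex; moreover there are `δ ∈ (0, 1/2)`
and `σ > 0` with `η''(ν) = ∫ J(x) x² e^{-ν x} dx ≥ σ e^{δ|ν|}` for all `ν`. -/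
theorem stmt1 (J : ℝ → ℝ) (hJcont : Continuous J) (hJnonneg : ∀ x, 0 ≤ J x)
    (hJ0 : 0 < J 0) (hJint : ∫ x, J x = 1) (hJsupp : HasCompactSupport J) (c : ℝ) :
    StrictConvexOn ℝ Set.univ (fun ν : ℝ => (∫ x, J x * Real.exp (-ν * x)) + c * ν) ∧
    ∃ δ σ : ℝ, 0 < δ ∧ δ < 1/2 ∧ 0 < σ ∧ ∀ ν : ℝ,
      iteratedDeriv 2 (fun ν : ℝ => (∫ x, J x * Real.exp (-ν * x)) + c * ν) ν
        = ∫ x, J x * x ^ 2 * Real.exp (-ν * x) ∧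
      σ * Real.exp (δ * |ν|) ≤ ∫ x, J x * x ^ 2 * Real.exp (-ν * x) :=
  stmt1_general J hJcont hJnonneg hJ0 hJsupp c
end

section
/- Let J : ℝ → ℝ be continuous, nonnegative, compactly supported, with J(0) > 0 and ∫_ℝ J = 1, and let c ∈ ℝ. Then the minimizer of ν ↦ ∫_ℝ J(x) e^{-ν x} dx + c ν over ℝ is unique: if η(ν₀) = η(ν₁) = inf_ν η(ν) then ν₀ = ν₁. -/
/-!
For every `x ≠ 0` the map `ν ↦ exp (-ν x)` is strictly convex, and `J` is positive near `0`, hence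
at some `x₀ ≠ 0`. By continuity the convexity gap of the integrand is positive on a neighbourhood of
`x₀`, so `ν ↦ ∫ J(x) e^{-ν x} dx` is strictly convex; adding the linear term `c ν` keeps it strictly
convex, and a strictly convex function has at most one minimizer.
-/

open MeasureTheory Real Set Topology

lemma strictConvexOn_exp_neg_mul {x : ℝ} (hx : x ≠ 0) :
    StrictConvexOn ℝ univ fun ν : ℝ ↦ exp (-ν * x) := by
  refine ⟨convex_univ, fun a _ b _ hab θ φ hθ hφ hθφ ↦ ?_⟩
  have hne : -a * x ≠ -b * x := fun h ↦ hab (by simpa [hx] using h)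
  convert strictConvexOn_exp.2 (mem_univ _) (mem_univ _) hne hθ hφ hθφ using 2
  simp only [smul_eq_mul]; ring

lemma convexOn_exp_neg_mul (x : ℝ) : ConvexOn ℝ univ fun ν : ℝ ↦ exp (-ν * x) := by
  rcases eq_or_ne x 0 with rfl | hx
  · simpa using convexOn_const (1 : ℝ) convex_univ
  · exact (strictConvexOn_exp_neg_mul hx).convexOn

lemma strictConvexOn_integral_mul_exp_neg_mul {J : ℝ → ℝ} (hJcont : Continuous J)
    (hJnonneg : ∀ x, 0 ≤ J x) (hJsupp : HasCompactSupport J) {x₀ : ℝ} (hx₀ : x₀ ≠ 0)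
    (hJx₀ : 0 < J x₀) :
    StrictConvexOn ℝ univ fun ν ↦ ∫ x, J x * exp (-ν * x) := by
  refine ⟨convex_univ, fun a _ b _ hab θ φ hθ hφ hθφ ↦ ?_⟩
  simp only [smul_eq_mul]
  have hint : ∀ ν : ℝ, Integrable fun x ↦ J x * exp (-ν * x) := fun ν ↦
    (hJcont.mul (by fun_prop)).integrable_of_hasCompactSupport hJsupp.mul_right
  set gap : ℝ → ℝ := fun x ↦
    θ * (J x * exp (-a * x)) + φ * (J x * exp (-b * x)) - J x * exp (-(θ * a + φ * b) * x)
  have hgap_eq : gap = fun x ↦ J x *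
      (θ * exp (-a * x) + φ * exp (-b * x) - exp (-(θ * a + φ * b) * x)) := by
    ext x; ring
  have hgap_nonneg : 0 ≤ gap := fun x ↦ by
    rw [hgap_eq]
    exact mul_nonneg (hJnonneg x) (sub_nonneg.2 <|
      (convexOn_exp_neg_mul x).2 (mem_univ a) (mem_univ b) hθ.le hφ.le hθφ)
  have hgap_x₀ : gap x₀ ≠ 0 := by
    rw [hgap_eq]
    exact (mul_pos hJx₀ (sub_pos.2 <|
      (strictConvexOn_exp_neg_mul hx₀).2 (mem_univ a) (mem_univ b) hab hθ hφ hθφ)).ne'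
  have hgap_pos : 0 < ∫ x, gap x :=
    Continuous.integral_pos_of_hasCompactSupport_nonneg_nonzero (by fun_prop)
      (by rw [hgap_eq]; exact hJsupp.mul_right) hgap_nonneg hgap_x₀
  simp only [gap] at hgap_pos
  have hcomb : Integrable fun x ↦ θ * (J x * exp (-a * x)) + φ * (J x * exp (-b * x)) :=
    ((hint a).const_mul θ).add ((hint b).const_mul φ)
  rw [integral_sub hcomb (hint _),
    integral_add ((hint a).const_mul θ) ((hint b).const_mul φ),
    integral_const_mul, integral_const_mul] at hgap_pos
  linarith

theorem stmt3_general (J : ℝ → ℝ) (hJcont : Continuous J) (hJnonneg : ∀ x, 0 ≤ J x)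
    (hJ0 : 0 < J 0) (hJsupp : HasCompactSupport J) (c : ℝ)
    (ν₀ ν₁ : ℝ)
    (h₀ : ∀ ν : ℝ, (∫ x, J x * Real.exp (-ν₀ * x)) + c * ν₀
        ≤ (∫ x, J x * Real.exp (-ν * x)) + c * ν)
    (h₁ : ∀ ν : ℝ, (∫ x, J x * Real.exp (-ν₁ * x)) + c * ν₁
        ≤ (∫ x, J x * Real.exp (-ν * x)) + c * ν) :
    ν₀ = ν₁ := by
  obtain ⟨x₀, hJx₀, hx₀⟩ : ∃ x₀, 0 < J x₀ ∧ x₀ ≠ 0 :=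
    ((hJcont.continuousAt.eventually (lt_mem_nhds hJ0)).filter_mono nhdsWithin_le_nhds
      |>.and self_mem_nhdsWithin).exists (f := 𝓝[≠] (0 : ℝ))
  have hη : StrictConvexOn ℝ univ fun ν ↦ (∫ x, J x * exp (-ν * x)) + c * ν :=
    (strictConvexOn_integral_mul_exp_neg_mul hJcont hJnonneg hJsupp hx₀ hJx₀).add_convexOn
      ((LinearMap.lsmul ℝ ℝ c).convexOn convex_univ)
  exact hη.eq_of_isMinOn (fun ν _ ↦ h₀ ν) (fun ν _ ↦ h₁ ν) (mem_univ _) (mem_univ _)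

/-- For compactly supported `J` satisfying (J) and any `c`, the minimizer
of `η(ν) = ∫ J(x) e^{-ν x} dx + c ν` over `ℝ` is unique. -/
theorem stmt3 (J : ℝ → ℝ) (hJcont : Continuous J) (hJnonneg : ∀ x, 0 ≤ J x)
    (hJ0 : 0 < J 0) (hJint : ∫ x, J x = 1) (hJsupp : HasCompactSupport J) (c : ℝ)
    (ν₀ ν₁ : ℝ)
    (h₀ : ∀ ν : ℝ, (∫ x, J x * Real.exp (-ν₀ * x)) + c * ν₀
        ≤ (∫ x, J x * Real.exp (-ν * x)) + c * ν)
    (h₁ : ∀ ν : ℝ, (∫ x, J x * Real.exp (-ν₁ * x)) + c * ν₁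
        ≤ (∫ x, J x * Real.exp (-ν * x)) + c * ν) :
    ν₀ = ν₁ :=
  stmt3_general J hJcont hJnonneg hJ0 hJsupp c ν₀ ν₁ h₀ h₁
end

section
/- For a ∈ [1/2, 1), let J_a be the indicator function of the interval [a-1, a] and G_a(ν) = ∫_ℝ J_a(x) e^{-ν x} dx = (e^ν - 1)/ν · e^{-ν a} for ν ≠ 0, G_a(0) = 1. Then λ_a := inf_{ν ∈ ℝ} G_a(ν) is nonincreasing in a on [1/2, 1), λ_{1/2} = 1, and λ_a → 0 as a → 1⁻. -/
open MeasureTheory Real Filter Set Topology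

/-!
`G_a` is the two-sided Laplace transform of the indicator of `[a - 1, a]`. Reflecting `x ↦ -x`
gives `G_a(-ν) = G_{1-a}(ν)`, and for `ν ≥ 0` the value `G_a(ν)` decreases in `a`. Hence for
`a ≥ 1/2` we have `G_a(|ν|) ≤ G_a(ν)`, so `λ_a` is an infimum over `ν ≥ 0` of functions
decreasing in `a`. At `a = 1/2` this reduces to `sinh t ≥ t`. Finally `ν = 1/(1 - a)` gives
`λ_a ≤ e (1 - a)`.
-/

noncomputable def boxLaplace (a ν : ℝ) : ℝ :=
  if ν = 0 then 1 else (exp ν - 1) / ν * exp (-ν * a)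

lemma exp_sub_one_div_pos {ν : ℝ} (hν : ν ≠ 0) : 0 < (exp ν - 1) / ν := by
  rcases hν.lt_or_gt with h | h
  · exact div_pos_of_neg_of_neg (by linarith [exp_lt_one_iff.mpr h]) h
  · exact div_pos (by linarith [one_lt_exp_iff.mpr h]) h

lemma boxLaplace_of_ne_zero (a : ℝ) {ν : ℝ} (hν : ν ≠ 0) :
    boxLaplace a ν = (exp ν - 1) / ν * exp (-ν * a) := if_neg hν

lemma boxLaplace_pos (a ν : ℝ) : 0 < boxLaplace a ν := by
  by_cases hν : ν = 0
  · simp [boxLaplace, hν]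
  · rw [boxLaplace_of_ne_zero a hν]
    exact mul_pos (exp_sub_one_div_pos hν) (exp_pos _)

lemma boxLaplace_eq_integral (a ν : ℝ) :
    boxLaplace a ν = ∫ x in Icc (a - 1) a, exp (-ν * x) := by
  rw [integral_Icc_eq_integral_Ioc, ← intervalIntegral.integral_of_le (by linarith)]
  by_cases hν : ν = 0
  · simp [boxLaplace, hν]
  · rw [intervalIntegral.integral_comp_mul_left (fun x => exp x) (neg_ne_zero.mpr hν),
      integral_exp, boxLaplace_of_ne_zero a hν, smul_eq_mul,
      show -ν * (a - 1) = ν + -ν * a by ring, exp_add]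
    field_simp
    ring

lemma boxLaplace_neg (a ν : ℝ) : boxLaplace a (-ν) = boxLaplace (1 - a) ν := by
  by_cases hν : ν = 0
  · simp [boxLaplace, hν]
  · rw [boxLaplace_of_ne_zero a (neg_ne_zero.mpr hν), boxLaplace_of_ne_zero _ hν,
      show -ν * (1 - a) = -ν + - -ν * a by ring, exp_add, exp_neg ν]
    field_simp
    ring

lemma boxLaplace_antitone_of_nonneg {ν : ℝ} (hν : 0 ≤ ν) : Antitone (boxLaplace · ν) := by
  intro a b hab
  rcases hν.eq_or_lt with rfl | hν
  · simp [boxLaplace]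
  · simp only [boxLaplace_of_ne_zero _ hν.ne']
    exact mul_le_mul_of_nonneg_left (exp_le_exp.mpr (by nlinarith))
      (exp_sub_one_div_pos hν.ne').le

lemma boxLaplace_abs_le {a : ℝ} (ha : 1 / 2 ≤ a) (ν : ℝ) :
    boxLaplace a |ν| ≤ boxLaplace a ν := by
  rcases le_or_gt 0 ν with hν | hν
  · rw [abs_of_nonneg hν]
  · calc boxLaplace a |ν| ≤ boxLaplace (1 - a) |ν| :=
          boxLaplace_antitone_of_nonneg (abs_nonneg ν) (by linarith)
      _ = boxLaplace a ν := by
          rw [abs_of_neg hν, boxLaplace_neg, sub_sub_cancel]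

lemma boxLaplace_le_exp_div {ν : ℝ} (hν : 0 < ν) (a : ℝ) :
    boxLaplace a ν ≤ exp (ν * (1 - a)) / ν := by
  rw [boxLaplace_of_ne_zero a hν.ne', show ν * (1 - a) = ν + -ν * a by ring, exp_add,
    div_mul_eq_mul_div]
  gcongr
  linarith [exp_pos ν]

lemma one_le_boxLaplace_half (ν : ℝ) : 1 ≤ boxLaplace (1 / 2) ν := by
  refine le_trans ?_ (boxLaplace_abs_le le_rfl ν)
  rcases (abs_nonneg ν).eq_or_lt with h | h
  · simp [boxLaplace, ← h]
  · have hsinh := self_le_sinh_iff.mpr (half_pos h).le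
    rw [sinh_eq] at hsinh
    rw [boxLaplace_of_ne_zero _ h.ne', div_mul_eq_mul_div, le_div_iff₀ h, one_mul, sub_mul,
      ← exp_add, one_mul, show |ν| + -|ν| * (1 / 2) = |ν| / 2 by ring,
      show -|ν| * (1 / 2) = -(|ν| / 2) by ring]
    linarith

section
variable (a : ℝ)

lemma boxLaplace_bddBelow : BddBelow (range (boxLaplace a)) :=
  ⟨0, by rintro _ ⟨ν, rfl⟩; exact (boxLaplace_pos a ν).le⟩

lemma iInf_boxLaplace_nonneg : 0 ≤ ⨅ ν, boxLaplace a ν :=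
  le_ciInf fun ν => (boxLaplace_pos a ν).le

lemma iInf_boxLaplace_le (ν : ℝ) : ⨅ μ, boxLaplace a μ ≤ boxLaplace a ν :=
  ciInf_le (boxLaplace_bddBelow a) ν
end

lemma iInf_boxLaplace_le_of_le {a b : ℝ} (ha : 1 / 2 ≤ a) (hab : a ≤ b) :
    ⨅ ν, boxLaplace b ν ≤ ⨅ ν, boxLaplace a ν :=
  le_ciInf fun ν => (iInf_boxLaplace_le b |ν|).trans <|
    (boxLaplace_antitone_of_nonneg (abs_nonneg ν) hab).trans (boxLaplace_abs_le ha ν)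

lemma iInf_boxLaplace_half : ⨅ ν, boxLaplace (1 / 2) ν = 1 :=
  le_antisymm ((iInf_boxLaplace_le _ 0).trans_eq (if_pos rfl)) (le_ciInf one_le_boxLaplace_half)

lemma iInf_boxLaplace_le_mul_sub {a : ℝ} (ha : a < 1) :
    ⨅ ν, boxLaplace a ν ≤ exp 1 * (1 - a) := by
  have h : 0 < 1 - a := sub_pos.mpr ha
  refine (iInf_boxLaplace_le a (1 - a)⁻¹).trans <|
    (boxLaplace_le_exp_div (inv_pos.mpr h) a).trans_eq ?_
  rw [inv_mul_cancel₀ h.ne', div_inv_eq_mul]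

lemma tendsto_iInf_boxLaplace :
    Tendsto (fun a => ⨅ ν, boxLaplace a ν) (𝓝[<] 1) (𝓝 0) := by
  have hlin : Tendsto (fun a : ℝ => exp 1 * (1 - a)) (𝓝[<] 1) (𝓝 0) := by
    have hcont : Continuous fun a : ℝ => exp 1 * (1 - a) := by fun_prop
    simpa using tendsto_nhdsWithin_of_tendsto_nhds (hcont.tendsto 1)
  exact tendsto_of_tendsto_of_tendsto_of_le_of_le' tendsto_const_nhds hlin
    (Eventually.of_forall iInf_boxLaplace_nonneg)
    (eventually_nhdsWithin_of_forall fun a ha => iInf_boxLaplace_le_mul_sub ha)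

/-- For `a ∈ [1/2, 1)`, with `G_a(ν) = ∫_{a-1}^a e^{-ν x} dx`
(equal to `(e^ν - 1)/ν · e^{-ν a}` for `ν ≠ 0` and `1` at `ν = 0`), the quantity
`λ_a = inf_ν G_a(ν)` is nonincreasing in `a` on `[1/2, 1)`, `λ_{1/2} = 1`, and
`λ_a → 0` as `a → 1⁻`. -/
theorem stmt6 :
    ∀ G : ℝ → ℝ → ℝ, (G = fun a ν =>
      if ν = 0 then 1 else (Real.exp ν - 1) / ν * Real.exp (-ν * a)) →
    ∀ lam : ℝ → ℝ, (lam = fun a => ⨅ ν : ℝ, G a ν) →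
      (∀ a ∈ Set.Ico (1/2 : ℝ) 1, ∀ ν : ℝ,
        G a ν = ∫ x in Set.Icc (a - 1) a, Real.exp (-ν * x)) ∧
      (∀ a ∈ Set.Ico (1/2 : ℝ) 1, ∀ b ∈ Set.Ico (1/2 : ℝ) 1, a ≤ b → lam b ≤ lam a) ∧
      lam (1/2) = 1 ∧
      Filter.Tendsto lam (nhdsWithin 1 (Set.Iio 1)) (nhds 0) := by
  rintro G rfl lam rfl
  exact ⟨fun a _ ν => boxLaplace_eq_integral a ν,
    fun a ha b _ hab => iInf_boxLaplace_le_of_le ha.1 hab,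
    iInf_boxLaplace_half, tendsto_iInf_boxLaplace⟩
end

section
/- Let J satisfy condition (J), d > 0, r > 0. Suppose the infimum λ := inf_{ν ∈ ℝ} A(ν) with A(ν) = d ∫_ℝ J(x) e^{-ν x} dx - d + c ν + r is attained at some ν₀ ∈ ℝ. If c ∈ (c_*^-, c_*^+) (where c_*^± are defined as in the KPP speed formulas), then λ > 0. Conversely if c < c_*^- or c > c_*^+, then λ < 0. -/
open MeasureTheory Real Filter Set

/-- `A(ν) = d ∫ J(x) e^{-ν x} dx - d + c ν + r`, valued in `EReal`. -/
noncomputable def Aev (J : ℝ → ℝ) (d c r ν : ℝ) : EReal :=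
  ((∫⁻ x, ENNReal.ofReal (d * J x * Real.exp (-ν * x)) : ENNReal) : EReal)
    - (d : EReal) + ((c * ν + r : ℝ) : EReal)

/-- `d ∫ J(x) e^{ν x} dx - d + r`, valued in `EReal`. -/
noncomputable def Lev (J : ℝ → ℝ) (d r ν : ℝ) : EReal :=
  ((∫⁻ x, ENNReal.ofReal (d * J x * Real.exp (ν * x)) : ENNReal) : EReal)
    - (d : EReal) + ((r : ℝ) : EReal)

/-- `c_*^- = sup_{ν<0} [d ∫ J e^{νx} - d + r]/ν` (`-∞` when the left thin-tail fails). -/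
noncomputable def cstarMinus (J : ℝ → ℝ) (d r : ℝ) : EReal :=
  ⨆ ν ∈ Set.Iio (0:ℝ), Lev J d r ν * ((ν⁻¹ : ℝ) : EReal)

/-- `c_*^+ = inf_{ν>0} [d ∫ J e^{νx} - d + r]/ν` (`+∞` when the right thin-tail fails). -/
noncomputable def cstarPlus (J : ℝ → ℝ) (d r : ℝ) : EReal :=
  ⨅ ν ∈ Set.Ioi (0:ℝ), Lev J d r ν * ((ν⁻¹ : ℝ) : EReal)

/-- `Lev` is either `⊤` or a real. -/
lemma lev_cases (J : ℝ → ℝ) (d r ν : ℝ) :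
    Lev J d r ν = ⊤ ∨ ∃ l : ℝ, Lev J d r ν = (l : EReal) := by
  unfold Lev
  set I := (∫⁻ x, ENNReal.ofReal (d * J x * Real.exp (ν * x)) : ENNReal) with hI
  rcases eq_or_ne I ⊤ with h | h
  · left
    rw [h]
    simp [EReal.top_sub_coe, EReal.top_add_coe]
  · right
    refine ⟨I.toReal - d + r, ?_⟩
    have : (I : EReal) = ((I.toReal : ℝ) : EReal) := by
      conv_lhs => rw [← ENNReal.ofReal_toReal h]
      rw [EReal.coe_ennreal_ofReal, max_eq_left ENNReal.toReal_nonneg]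
    rw [this, ← EReal.coe_sub, ← EReal.coe_add]

lemma aev_eq (J : ℝ → ℝ) (d c r ν : ℝ) :
    Aev J d c r ν = Lev J d r (-ν) + ((c * ν : ℝ) : EReal) := by
  unfold Aev Lev
  set I := (∫⁻ x, ENNReal.ofReal (d * J x * Real.exp (-ν * x)) : ENNReal) with hI
  rcases eq_or_ne I ⊤ with h | h
  · rw [h]
    simp only [EReal.coe_ennreal_top, EReal.top_sub_coe, EReal.top_add_coe]
  · have hco : (I : EReal) = ((I.toReal : ℝ) : EReal) := by
      conv_lhs => rw [← ENNReal.ofReal_toReal h]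
      rw [EReal.coe_ennreal_ofReal, max_eq_left ENNReal.toReal_nonneg]
    rw [hco]
    norm_cast
    ring

lemma lev_zero (J : ℝ → ℝ) (hJnonneg : ∀ x, 0 ≤ J x) (hJL1 : Integrable J)
    (hJint : ∫ x, J x = 1) (d r : ℝ) (hd : 0 < d) :
    Lev J d r 0 = (r : EReal) := by
  unfold Lev
  have h1 : (∫⁻ x, ENNReal.ofReal (d * J x * Real.exp (0 * x)) : ENNReal)
      = ENNReal.ofReal d := by
    have he : ∀ x : ℝ, d * J x * Real.exp (0 * x) = d * J x := by
      intro x; simp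
    simp only [he]
    rw [← MeasureTheory.ofReal_integral_eq_lintegral_ofReal (hJL1.const_mul d)
      (Filter.Eventually.of_forall fun x => mul_nonneg hd.le (hJnonneg x))]
    rw [integral_const_mul, hJint, mul_one]
  rw [h1]
  have h2 : ((ENNReal.ofReal d : ENNReal) : EReal) = (d : EReal) := by
    rw [EReal.coe_ennreal_ofReal, max_eq_left hd.le]
  rw [h2, ← EReal.coe_sub, ← EReal.coe_add]
  norm_cast
  ring

/-- if `λ = inf_ν A(ν)` is attained at `ν₀` (with finite value), then
`c ∈ (c_*^-, c_*^+)` implies `λ > 0`, while `c < c_*^-` or `c > c_*^+` implies `λ < 0`. -/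
theorem stmt8 (J : ℝ → ℝ) (hJcont : Continuous J) (hJbdd : ∃ C, ∀ x, J x ≤ C)
    (hJnonneg : ∀ x, 0 ≤ J x) (hJ0 : 0 < J 0) (hJL1 : Integrable J)
    (hJint : ∫ x, J x = 1) (d r c : ℝ) (hd : 0 < d) (hr : 0 < r)
    (ν₀ : ℝ) (hfin : Aev J d c r ν₀ ≠ ⊤)
    (hmin : ∀ ν : ℝ, Aev J d c r ν₀ ≤ Aev J d c r ν) :
    ((cstarMinus J d r < (c : EReal) ∧ (c : EReal) < cstarPlus J d r) →
        0 < Aev J d c r ν₀) ∧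
    (((c : EReal) < cstarMinus J d r ∨ cstarPlus J d r < (c : EReal)) →
        Aev J d c r ν₀ < 0) := by
  constructor
  · rintro ⟨hm, hp⟩
    rw [cstarMinus] at hm
    rw [cstarPlus] at hp
    rw [aev_eq]
    rcases lt_trichotomy ν₀ 0 with h0 | h0 | h0
    · -- ν₀ < 0, so -ν₀ > 0 : use cstarPlus
      have hν : (0:ℝ) < -ν₀ := by linarith
      have hkey : (c : EReal) < Lev J d r (-ν₀) * (((-ν₀)⁻¹ : ℝ) : EReal) :=
        lt_of_lt_of_le hp (iInf₂_le (-ν₀) (Set.mem_Ioi.mpr hν))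
      rcases lev_cases J d r (-ν₀) with htop | ⟨l, hl⟩
      · rw [htop, EReal.top_add_coe]; exact (by simp : (0:EReal) < ⊤)
      · rw [hl] at hkey ⊢
        rw [← EReal.coe_mul] at hkey
        have hc : c < l * (-ν₀)⁻¹ := by exact_mod_cast hkey
        have hcl : c * (-ν₀) < l := by
          rw [← div_eq_mul_inv] at hc
          exact (lt_div_iff₀ hν).mp hc
        rw [← EReal.coe_add]
        norm_cast
        nlinarith
    · -- ν₀ = 0
      subst h0
      rw [neg_zero, lev_zero J hJnonneg hJL1 hJint d r hd]
      rw [← EReal.coe_add]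
      norm_cast
      linarith
    · -- ν₀ > 0, so -ν₀ < 0 : use cstarMinus
      have hν : (-ν₀ : ℝ) < 0 := by linarith
      have hkey : Lev J d r (-ν₀) * (((-ν₀)⁻¹ : ℝ) : EReal) < (c : EReal) :=
        lt_of_le_of_lt (le_iSup₂ (f := fun ν (_ : ν ∈ Set.Iio (0:ℝ)) => Lev J d r ν * ((ν⁻¹ : ℝ) : EReal)) (-ν₀) (Set.mem_Iio.mpr hν)) hm
      rcases lev_cases J d r (-ν₀) with htop | ⟨l, hl⟩
      · rw [htop, EReal.top_add_coe]; exact (by simp : (0:EReal) < ⊤)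
      · rw [hl] at hkey ⊢
        rw [← EReal.coe_mul] at hkey
        have hc : l * (-ν₀)⁻¹ < c := by exact_mod_cast hkey
        have hcl : c * (-ν₀) < l := by
          rw [← div_eq_mul_inv] at hc
          exact (div_lt_iff_of_neg hν).mp hc
        rw [← EReal.coe_add]
        norm_cast
        nlinarith
  · rintro (hm | hp)
    · -- c < cstarMinus : ∃ ν < 0 with c < Lev ν * ν⁻¹
      rw [cstarMinus] at hm
      obtain ⟨ν, hνlt, hν⟩ : ∃ ν : ℝ, ν < 0 ∧
          (c : EReal) < Lev J d r ν * ((ν⁻¹ : ℝ) : EReal) := by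
        simpa [lt_iSup_iff, Set.mem_Iio] using hm
      rcases lev_cases J d r ν with htop | ⟨l, hl⟩
      · rw [htop, EReal.top_mul_coe_of_neg (by simpa using hνlt)] at hν
        exact absurd hν (by simp)
      · rw [hl, ← EReal.coe_mul] at hν
        have hc : c < l * ν⁻¹ := by exact_mod_cast hν
        have hcl : l < c * ν := by
          rw [← div_eq_mul_inv] at hc
          exact (lt_div_iff_of_neg hνlt).mp hc
        refine lt_of_le_of_lt (hmin (-ν)) ?_
        rw [aev_eq, neg_neg, hl, ← EReal.coe_add]
        norm_cast
        nlinarith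
    · -- cstarPlus < c : ∃ ν > 0 with Lev ν * ν⁻¹ < c
      rw [cstarPlus] at hp
      obtain ⟨ν, hνlt, hν⟩ : ∃ ν : ℝ, 0 < ν ∧
          Lev J d r ν * ((ν⁻¹ : ℝ) : EReal) < (c : EReal) := by
        simpa [iInf_lt_iff, Set.mem_Ioi] using hp
      rcases lev_cases J d r ν with htop | ⟨l, hl⟩
      · rw [htop, EReal.top_mul_coe_of_pos (by simpa using hνlt)] at hν
        exact absurd hν (by simp)
      · rw [hl, ← EReal.coe_mul] at hν
        have hc : l * ν⁻¹ < c := by exact_mod_cast hν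
        have hcl : l < c * ν := by
          rw [← div_eq_mul_inv] at hc
          exact (div_lt_iff₀ hνlt).mp hc
        refine lt_of_le_of_lt (hmin (-ν)) ?_
        rw [aev_eq, neg_neg, hl, ← EReal.coe_add]
        norm_cast
        nlinarith
end

section
/- Let J satisfy condition (J), and suppose λ > 0, φ ∈ C([0,l]) with φ > 0 on [0,l] satisfies λ φ(x) = ∫_0^l J(x-y) φ(y) dy on [0,l], and φ̂ ∈ C([0,l̂]) with φ̂ > 0 on [0,l̂], l̂ > l, satisfies λ φ̂(x) = ∫_0^{l̂} J(x-y) φ̂(y) dy on [0,l̂]. Then a contradiction arises; i.e., the principal eigenvalue λ_p of the operator φ ↦ ∫_0^l J(·-y)φ(y)dy is strictly increasing in l. -/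
open MeasureTheory Real Filter Set

/-- If a nonneg continuous function on `[a,b]` is positive somewhere, its integral is positive. -/
lemma aux_pos_integral {f : ℝ → ℝ} {a b x₀ : ℝ} (hab : a < b)
    (hf : ContinuousOn f (Set.Icc a b)) (h0 : ∀ x ∈ Set.Icc a b, 0 ≤ f x)
    (hx₀ : x₀ ∈ Set.Icc a b) (hpos : 0 < f x₀) :
    0 < ∫ y in Set.Icc a b, f y := by
  have hcw : ContinuousWithinAt f (Set.Icc a b) x₀ := hf x₀ hx₀
  rw [Metric.continuousWithinAt_iff] at hcw
  obtain ⟨δ, hδ, hδ'⟩ := hcw (f x₀ / 2) (by linarith)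
  set c := max a (x₀ - δ/2) with hc
  set d := min b (x₀ + δ/2) with hd
  have hcd : c < d := by
    rcases hx₀ with ⟨h1, h2⟩
    apply max_lt <;> apply lt_min <;> linarith
  have hsub : Set.Icc c d ⊆ Set.Icc a b :=
    Set.Icc_subset_Icc (le_max_left _ _) (min_le_left _ _)
  have hlow : ∀ y ∈ Set.Icc c d, f x₀ / 2 ≤ f y := by
    intro y hy
    have hy' : y ∈ Set.Icc a b := hsub hy
    have hdist : dist y x₀ < δ := by
      rw [Real.dist_eq, abs_lt]
      rcases hy with ⟨h1, h2⟩
      have := le_max_right a (x₀ - δ/2)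
      have := min_le_right b (x₀ + δ/2)
      constructor <;> linarith
    have := hδ' hy' hdist
    rw [Real.dist_eq, abs_lt] at this
    linarith
  have hint : IntegrableOn f (Set.Icc a b) := hf.integrableOn_Icc
  have h1 : (f x₀ / 2) * (volume (Set.Icc c d)).toReal ≤ ∫ y in Set.Icc c d, f y :=
    setIntegral_ge_of_const_le_real measurableSet_Icc (by simp) hlow (hint.mono_set hsub)
  have h2 : ∫ y in Set.Icc c d, f y ≤ ∫ y in Set.Icc a b, f y := by
    apply setIntegral_mono_set hint
    · filter_upwards [ae_restrict_mem measurableSet_Icc] with y hy using h0 y hy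
    · exact HasSubset.Subset.eventuallyLE hsub
  have hvol : (volume (Set.Icc c d)).toReal = d - c := by
    rw [Real.volume_Icc, ENNReal.toReal_ofReal (by linarith)]
  nlinarith [hvol ▸ h1]

/-- the principal eigenvalue of `φ ↦ ∫_0^l J(·-y) φ(y) dy` is strictly
increasing in `l`: if `λ > 0` is an eigenvalue with positive continuous eigenfunctions
simultaneously on `[0, l]` and on `[0, l̂]` with `l < l̂`, a contradiction arises. -/
theorem stmt11 (J : ℝ → ℝ) (hJcont : Continuous J) (hJbdd : ∃ C, ∀ x, J x ≤ C)
    (hJnonneg : ∀ x, 0 ≤ J x) (hJ0 : 0 < J 0) (hJL1 : Integrable J)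
    (hJint : ∫ x, J x = 1)
    (l lhat lam : ℝ) (hl : 0 < l) (hll : l < lhat) (hlam : 0 < lam)
    (φ φhat : ℝ → ℝ)
    (hφcont : ContinuousOn φ (Set.Icc 0 l))
    (hφpos : ∀ x ∈ Set.Icc 0 l, 0 < φ x)
    (hφeq : ∀ x ∈ Set.Icc 0 l, lam * φ x = ∫ y in Set.Icc 0 l, J (x - y) * φ y)
    (hφhatcont : ContinuousOn φhat (Set.Icc 0 lhat))
    (hφhatpos : ∀ x ∈ Set.Icc 0 lhat, 0 < φhat x)
    (hφhateq : ∀ x ∈ Set.Icc 0 lhat,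
      lam * φhat x = ∫ y in Set.Icc 0 lhat, J (x - y) * φhat y) :
    False := by
  -- J is positive near 0
  obtain ⟨ε, hε, hJε⟩ : ∃ ε > 0, ∀ t : ℝ, |t| < ε → 0 < J t := by
    obtain ⟨ε, hε, h⟩ := Metric.continuousAt_iff.mp (hJcont.continuousAt (x := 0)) (J 0) hJ0
    refine ⟨ε, hε, fun t ht => ?_⟩
    have := h (x := t) (by simpa [Real.dist_eq] using ht)
    rw [Real.dist_eq] at this
    have := (abs_lt.mp this).1
    linarith
  have hIcc_sub : Set.Icc (0:ℝ) l ⊆ Set.Icc 0 lhat := Set.Icc_subset_Icc le_rfl hll.le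
  -- minimizer of the ratio
  have hgcont : ContinuousOn (fun y => φhat y / φ y) (Set.Icc 0 l) :=
    (hφhatcont.mono hIcc_sub).div hφcont (fun y hy => (hφpos y hy).ne')
  obtain ⟨x₀, hx₀, hmin⟩ := isCompact_Icc.exists_isMinOn (Set.nonempty_Icc.mpr hl.le) hgcont
  set δ₀ := φhat x₀ / φ x₀ with hδ₀
  have hδ₀pos : 0 < δ₀ := div_pos (hφhatpos x₀ (hIcc_sub hx₀)) (hφpos x₀ hx₀)
  have hge : ∀ y ∈ Set.Icc 0 l, δ₀ * φ y ≤ φhat y := by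
    intro y hy
    have hrat : φhat x₀ / φ x₀ ≤ φhat y / φ y := hmin hy
    have hmul := (div_le_div_iff₀ (hφpos x₀ hx₀) (hφpos y hy)).mp hrat
    rw [hδ₀, div_mul_eq_mul_div, div_le_iff₀ (hφpos x₀ hx₀)]
    linarith
  -- the set where equality holds
  set E := {x | x ∈ Set.Icc 0 l ∧ φhat x = δ₀ * φ x} with hE
  have hx₀E : x₀ ∈ E := ⟨hx₀, (div_mul_cancel₀ _ (hφpos x₀ hx₀).ne').symm⟩
  -- key computation for points of E
  have hkey : ∀ z ∈ E,
      (∫ y in Set.Icc 0 l, J (z - y) * (φhat y - δ₀ * φ y)) = 0 ∧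
      (∫ y in Set.Icc l lhat, J (z - y) * φhat y) = 0 := by
    intro z hz
    obtain ⟨hzI, hzeq⟩ := hz
    have hzI' : z ∈ Set.Icc 0 lhat := hIcc_sub hzI
    -- integrability
    have hint1 : IntegrableOn (fun y => J (z - y) * φhat y) (Set.Icc 0 lhat) :=
      (((hJcont.comp (continuous_const.sub continuous_id)).continuousOn).mul
        hφhatcont).integrableOn_Icc
    have hint1' : IntegrableOn (fun y => J (z - y) * φhat y) (Set.Icc 0 l) :=
      hint1.mono_set hIcc_sub
    have hint2 : IntegrableOn (fun y => J (z - y) * (δ₀ * φ y)) (Set.Icc 0 l) :=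
      (((hJcont.comp (continuous_const.sub continuous_id)).continuousOn).mul
        (continuousOn_const.mul hφcont)).integrableOn_Icc
    -- split the integral
    have hsplit : (∫ y in Set.Icc 0 lhat, J (z - y) * φhat y)
        = (∫ y in Set.Icc 0 l, J (z - y) * φhat y)
          + ∫ y in Set.Ioc l lhat, J (z - y) * φhat y := by
      rw [← setIntegral_union (Set.disjoint_left.mpr (fun y hy1 hy2 => absurd hy1.2 (not_le.mpr hy2.1))) measurableSet_Ioc hint1'
        (hint1.mono_set (fun y hy => ⟨le_trans hl.le hy.1.le, hy.2⟩)),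
        Set.Icc_union_Ioc_eq_Icc hl.le hll.le]
    have hA : (∫ y in Set.Icc 0 l, J (z - y) * (φhat y - δ₀ * φ y))
        = (∫ y in Set.Icc 0 l, J (z - y) * φhat y)
          - ∫ y in Set.Icc 0 l, J (z - y) * (δ₀ * φ y) := by
      rw [← integral_sub hint1' hint2]
      congr 1; ext y; ring
    have hδφ : (∫ y in Set.Icc 0 l, J (z - y) * (δ₀ * φ y)) = lam * (δ₀ * φ z) := by
      have : (∫ y in Set.Icc 0 l, J (z - y) * (δ₀ * φ y))
          = δ₀ * ∫ y in Set.Icc 0 l, J (z - y) * φ y := by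
        rw [← integral_const_mul]; congr 1; ext y; ring
      rw [this, ← hφeq z hzI]; ring
    -- the sum of the two nonneg integrals is zero
    have hsum : (∫ y in Set.Icc 0 l, J (z - y) * (φhat y - δ₀ * φ y))
        + (∫ y in Set.Ioc l lhat, J (z - y) * φhat y) = 0 := by
      have h1 := hφhateq z hzI'
      rw [hsplit] at h1
      rw [hA, hδφ]
      have : lam * φhat z = lam * (δ₀ * φ z) := by rw [hzeq]
      linarith
    have hAnn : 0 ≤ ∫ y in Set.Icc 0 l, J (z - y) * (φhat y - δ₀ * φ y) := by
      apply setIntegral_nonneg measurableSet_Icc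
      intro y hy
      exact mul_nonneg (hJnonneg _) (by linarith [hge y hy])
    have hBnn : 0 ≤ ∫ y in Set.Ioc l lhat, J (z - y) * φhat y := by
      apply setIntegral_nonneg measurableSet_Ioc
      intro y hy
      exact mul_nonneg (hJnonneg _)
        (le_of_lt (hφhatpos y ⟨le_trans hl.le hy.1.le, hy.2⟩))
    refine ⟨by linarith, ?_⟩
    rw [integral_Icc_eq_integral_Ioc]
    linarith
  -- E is closed, take its supremum
  have hEclosed : IsClosed E := by
    have : E = Set.Icc 0 l ∩ (fun x => φhat x - δ₀ * φ x) ⁻¹' {0} := by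
      ext x; simp only [hE, Set.mem_setOf_eq, Set.mem_inter_iff, Set.mem_preimage,
        Set.mem_singleton_iff]
      constructor
      · rintro ⟨h1, h2⟩; exact ⟨h1, by rw [h2]; ring⟩
      · rintro ⟨h1, h2⟩; exact ⟨h1, by linarith⟩
    rw [this]
    exact ContinuousOn.preimage_isClosed_of_isClosed
      ((hφhatcont.mono hIcc_sub).sub (continuousOn_const.mul hφcont))
      isClosed_Icc isClosed_singleton
  have hEbdd : BddAbove E := ⟨l, fun x hx => hx.1.2⟩
  have hEne : E.Nonempty := ⟨x₀, hx₀E⟩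
  set m := sSup E with hm
  have hmE : m ∈ E := hEclosed.csSup_mem hEne hEbdd
  have hmle : m ≤ l := hmE.1.2
  have hm0 : 0 ≤ m := hmE.1.1
  rcases eq_or_lt_of_le hmle with hml | hml
  · -- m = l : tail integral positive, contradiction
    have hB := (hkey m hmE).2
    set y₁ := min (m + ε/2) ((m + lhat)/2) with hy₁
    have hy₁m : m < y₁ := by
      apply lt_min <;> [linarith; (rw [hml]; linarith)]
    have hy₁lt : y₁ < lhat := by
      apply min_lt_of_right_lt; rw [hml]; linarith
    have hy₁I : y₁ ∈ Set.Icc m lhat := ⟨hy₁m.le, hy₁lt.le⟩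
    have hJpos : 0 < J (m - y₁) := by
      apply hJε
      rw [abs_sub_comm, abs_of_nonneg (by linarith)]
      have := min_le_left (m + ε/2) ((m + lhat)/2)
      linarith
    have hposa : 0 < ∫ y in Set.Icc m lhat, J (m - y) * φhat y := by
      apply aux_pos_integral (by rw [hml]; exact hll)
        (((hJcont.comp (continuous_const.sub continuous_id)).continuousOn).mul
          (hφhatcont.mono (Set.Icc_subset_Icc hm0 le_rfl)))
        (fun y hy => mul_nonneg (hJnonneg _)
          (hφhatpos y ⟨le_trans hm0 hy.1, hy.2⟩).le)
        hy₁I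
        (mul_pos hJpos (hφhatpos y₁ ⟨le_trans hm0 hy₁m.le, hy₁lt.le⟩))
    rw [hml] at hposa hB
    linarith
  · -- m < l : equality propagates beyond m, contradiction with sSup
    have hAint := (hkey m hmE).1
    set y₁ := min (m + ε/2) ((m + l)/2) with hy₁
    have hy₁m : m < y₁ := by
      apply lt_min <;> linarith
    have hy₁le : y₁ ≤ l := by
      have := min_le_right (m + ε/2) ((m + l)/2)
      linarith
    have hy₁I : y₁ ∈ Set.Icc (0:ℝ) l := ⟨le_trans hm0 hy₁m.le, hy₁le⟩
    have hJpos : 0 < J (m - y₁) := by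
      apply hJε
      rw [abs_sub_comm, abs_of_nonneg (by linarith)]
      have := min_le_left (m + ε/2) ((m + l)/2)
      linarith
    have hy₁E : y₁ ∈ E := by
      refine ⟨hy₁I, ?_⟩
      by_contra hne
      have hgt : 0 < φhat y₁ - δ₀ * φ y₁ :=
        lt_of_le_of_ne (by linarith [hge y₁ hy₁I]) (fun h => hne (by linarith))
      have : 0 < ∫ y in Set.Icc 0 l, J (m - y) * (φhat y - δ₀ * φ y) := by
        apply aux_pos_integral hl
          (((hJcont.comp (continuous_const.sub continuous_id)).continuousOn).mul
            ((hφhatcont.mono hIcc_sub).sub (continuousOn_const.mul hφcont)))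
          (fun y hy => mul_nonneg (hJnonneg _) (by show 0 ≤ φhat y - δ₀ * φ y; linarith [hge y hy]))
          hy₁I (mul_pos hJpos hgt)
      linarith
    have : y₁ ≤ m := le_csSup hEbdd hy₁E
    linarith
end

section
/- Let J satisfy condition (J), l > 0, c > 0, d > 0. Let U_l^c = {φ ∈ C([-l,l]) : φ ≥ 0, φ(l) = 0} and V_l^c = {φ ∈ C¹([-l,l]) : φ ≥ 0, φ(l) = 0, φ'(l) = -(d/c) ∫_{-l}^l J(l-y) φ(y) dy}. Then V_l^c is dense in U_l^c with respect to the sup norm: for every U₀ ∈ U_l^c and ε > 0 there exists V₀ ∈ V_l^c with sup_{x ∈ [-l,l]} |U₀(x) - V₀(x)| ≤ ε. -/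
/-!
Approximate `U₀` by a polynomial `P`, and replace `P - P(l)` by the smoothed absolute value
`√((P - P(l))² + τ²) - τ`: this is a nonnegative `C¹` function `W` close to `U₀` with
`W(l) = W'(l) = 0`. Adding a multiple `m` of the boundary layer `φ_δ = 1 - e^{(x-l)/δ}`, which
satisfies `0 ≤ φ_δ ≤ 1` and `φ_δ'(l) = -1/δ`, makes the boundary condition a linear equation for
`m` with solution `m = O(δ)`, so for small `δ` the correction is uniformly small.
-/

open MeasureTheory Real Set

lemma sqrt_sq_add_sq_sub_nonneg (t τ : ℝ) (hτ : 0 ≤ τ) : 0 ≤ √(t ^ 2 + τ ^ 2) - τ := by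
  have := sqrt_le_sqrt (le_add_of_nonneg_left (sq_nonneg t) : τ ^ 2 ≤ t ^ 2 + τ ^ 2)
  rw [sqrt_sq hτ] at this
  linarith

lemma abs_abs_sub_sqrt_sq_add_sq_sub_le (t τ : ℝ) (hτ : 0 ≤ τ) :
    |(|t|) - (√(t ^ 2 + τ ^ 2) - τ)| ≤ τ := by
  have hlow : |t| ≤ √(t ^ 2 + τ ^ 2) := by
    rw [← sqrt_sq_eq_abs]
    exact sqrt_le_sqrt (le_add_of_nonneg_right (sq_nonneg τ))
  have hupp : √(t ^ 2 + τ ^ 2) ≤ |t| + τ := by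
    rw [sqrt_le_left (by positivity)]
    nlinarith [sq_abs t, abs_nonneg t]
  rw [abs_le]
  constructor <;> linarith

theorem exists_contDiff_nonneg_flat_near {f : ℝ → ℝ} {a b ε : ℝ} (hab : a ≤ b)
    (hf : ContinuousOn f (Icc a b)) (hf₀ : ∀ x ∈ Icc a b, 0 ≤ f x) (hfb : f b = 0)
    (hε : 0 < ε) :
    ∃ g : ℝ → ℝ, ContDiff ℝ 1 g ∧ (∀ x, 0 ≤ g x) ∧ g b = 0 ∧ HasDerivAt g 0 b ∧
      ∀ x ∈ Icc a b, |f x - g x| ≤ ε := by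
  set τ := ε / 3 with hτ
  have hτ₀ : 0 < τ := by positivity
  obtain ⟨P, hP⟩ := exists_polynomial_near_of_continuousOn a b f hf τ hτ₀
  set R : ℝ → ℝ := fun x => P.eval x - P.eval b
  have hR : ContDiff ℝ 1 R := by
    simpa [R] using (P.contDiff_aeval (𝕜 := ℝ) 1).sub contDiff_const
  have hpos : ∀ x, R x ^ 2 + τ ^ 2 ≠ 0 := fun x => by positivity
  refine ⟨fun x => √(R x ^ 2 + τ ^ 2) - τ, ((hR.pow 2).add contDiff_const).sqrt hpos
    |>.sub contDiff_const, fun x => sqrt_sq_add_sq_sub_nonneg _ _ hτ₀.le,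
    by simp [R, sqrt_sq hτ₀.le], ?_, fun x hx => ?_⟩
  · have hR' : HasDerivAt R (P.derivative.eval b) b := (P.hasDerivAt b).sub_const _
    refine ((((hR'.pow 2).add_const _).sqrt (hpos b)).sub_const τ).congr_deriv ?_
    simp [R]
  · have hRf : |R x - f x| < 2 * τ := by
      have hb := hP b (right_mem_Icc.2 hab)
      rw [hfb, sub_zero] at hb
      calc |R x - f x| = |(P.eval x - f x) - P.eval b| := by congr 1; ring
        _ ≤ |P.eval x - f x| + |P.eval b| := abs_sub _ _
        _ < 2 * τ := by linarith [hP x hx]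
    have hfR : |f x - (|R x|)| ≤ |R x - f x| := by
      simpa [abs_of_nonneg (hf₀ x hx), abs_sub_comm] using abs_abs_sub_abs_le_abs_sub (f x) (R x)
    calc |f x - (√(R x ^ 2 + τ ^ 2) - τ)|
        ≤ |f x - (|R x|)| + |(|R x|) - (√(R x ^ 2 + τ ^ 2) - τ)| := abs_sub_le _ _ _
      _ ≤ 2 * τ + τ := by
          linarith [abs_abs_sub_sqrt_sq_add_sq_sub_le (R x) τ hτ₀.le]
      _ = ε := by rw [hτ]; ring

noncomputable def boundaryLayer (b δ x : ℝ) : ℝ := 1 - exp ((x - b) / δ)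

lemma contDiff_boundaryLayer {n : WithTop ℕ∞} (b δ : ℝ) : ContDiff ℝ n (boundaryLayer b δ) := by
  unfold boundaryLayer
  fun_prop

lemma boundaryLayer_self (b δ : ℝ) : boundaryLayer b δ b = 0 := by
  simp [boundaryLayer]

lemma boundaryLayer_nonneg {b δ x : ℝ} (hδ : 0 ≤ δ) (hx : x ≤ b) : 0 ≤ boundaryLayer b δ x := by
  have : exp ((x - b) / δ) ≤ 1 := exp_le_one_iff.2 (div_nonpos_of_nonpos_of_nonneg (by linarith) hδ)
  simpa [boundaryLayer] using this

lemma boundaryLayer_le_one (b δ x : ℝ) : boundaryLayer b δ x ≤ 1 := by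
  simp [boundaryLayer, (exp_pos _).le]

lemma hasDerivAt_boundaryLayer_self (b δ : ℝ) : HasDerivAt (boundaryLayer b δ) (-δ⁻¹) b := by
  refine ((((hasDerivAt_id b).sub_const b).div_const δ).exp.const_sub 1).congr_deriv ?_
  simp

lemma exists_layer_width_weight {k IK IW ε : ℝ} (F : ℝ → ℝ) (hk : 0 ≤ k) (hIK : 0 ≤ IK)
    (hIW : 0 ≤ IW) (hε : 0 < ε) (hF : ∀ δ, F δ ≤ IK) :
    ∃ δ m : ℝ, 0 < δ ∧ 0 ≤ m ∧ m ≤ ε ∧ m * (1 - k * δ * F δ) = k * δ * IW := by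
  -- chosen so that `k δ IK ≤ 1/2` and `2 k δ IW ≤ ε`
  set δ := (2 * k * (IK + IW / ε) + 1)⁻¹
  have hδ : 0 < δ := by positivity
  have hδ_eq : 2 * (k * δ * IK) + 2 * (k * δ * IW) / ε + δ = 1 := by
    simp only [δ]
    field_simp
  have hkδIK : 0 ≤ k * δ * IK := by positivity
  have hkδIW : 2 * (k * δ * IW) ≤ ε := by
    rw [← div_le_one hε]
    linarith
  have hD : 1 / 2 ≤ 1 - k * δ * F δ := by
    linarith [mul_le_mul_of_nonneg_left (hF δ) (by positivity : 0 ≤ k * δ),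
      (by positivity : 0 ≤ 2 * (k * δ * IW) / ε)]
  refine ⟨δ, k * δ * IW / (1 - k * δ * F δ), hδ, div_nonneg (by positivity) (by linarith), ?_,
    div_mul_cancel₀ _ (by linarith)⟩
  rw [div_le_iff₀ (by linarith)]
  nlinarith

theorem exists_near_satisfying_boundary_condition {K W : ℝ → ℝ} {a b k ε : ℝ}
    (hK : IntegrableOn K (Icc a b)) (hK₀ : ∀ y ∈ Icc a b, 0 ≤ K y) (hk : 0 ≤ k) (hε : 0 < ε)
    (hW : ContDiff ℝ 1 W) (hW₀ : ∀ x ∈ Icc a b, 0 ≤ W x) (hWb : W b = 0)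
    (hW' : HasDerivAt W 0 b) :
    ∃ V : ℝ → ℝ, ContDiff ℝ 1 V ∧ (∀ x ∈ Icc a b, 0 ≤ V x) ∧ V b = 0 ∧
      deriv V b = -k * ∫ y in Icc a b, K y * V y ∧ ∀ x ∈ Icc a b, |W x - V x| ≤ ε := by
  have hKφ (δ : ℝ) : IntegrableOn (fun y => K y * boundaryLayer b δ y) (Icc a b) :=
    hK.mul_continuousOn (contDiff_boundaryLayer (n := 0) b δ).continuous.continuousOn
      isCompact_Icc
  have hKW : IntegrableOn (fun y => K y * W y) (Icc a b) :=
    hK.mul_continuousOn hW.continuous.continuousOn isCompact_Icc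
  obtain ⟨δ, m, hδ, hm₀, hmε, hm⟩ := exists_layer_width_weight
    (fun δ => ∫ y in Icc a b, K y * boundaryLayer b δ y) hk
    (setIntegral_nonneg measurableSet_Icc hK₀)
    (setIntegral_nonneg measurableSet_Icc fun y hy => mul_nonneg (hK₀ y hy) (hW₀ y hy)) hε
    fun δ => setIntegral_mono_on (hKφ δ) hK measurableSet_Icc fun y hy =>
      mul_le_of_le_one_right (hK₀ y hy) (boundaryLayer_le_one b δ y)
  have hφ₀ : ∀ x ∈ Icc a b, 0 ≤ m * boundaryLayer b δ x := fun x hx =>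
    mul_nonneg hm₀ (boundaryLayer_nonneg hδ.le hx.2)
  refine ⟨fun x => W x + m * boundaryLayer b δ x,
    hW.add (contDiff_const.mul (contDiff_boundaryLayer b δ)),
    fun x hx => add_nonneg (hW₀ x hx) (hφ₀ x hx), by simp [hWb, boundaryLayer_self], ?_,
    fun x hx => ?_⟩
  · have hsplit : ∫ y in Icc a b, K y * (W y + m * boundaryLayer b δ y) =
        (∫ y in Icc a b, K y * W y) + m * ∫ y in Icc a b, K y * boundaryLayer b δ y := by
      simp only [mul_add, mul_left_comm (K _) m]
      rw [integral_add hKW ((hKφ δ).const_mul m), integral_const_mul]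
    have hV' : HasDerivAt (fun x => W x + m * boundaryLayer b δ x) (0 + m * -δ⁻¹) b :=
      hW'.add ((hasDerivAt_boundaryLayer_self b δ).const_mul m)
    rw [hV'.deriv, hsplit, zero_add, mul_neg, neg_mul, neg_inj, ← div_eq_mul_inv,
      div_eq_iff hδ.ne']
    linear_combination hm
  · rw [sub_add_cancel_left, abs_neg, abs_of_nonneg (hφ₀ x hx)]
    exact mul_le_of_le_one_right hm₀ (boundaryLayer_le_one b δ x) |>.trans hmε

theorem stmt16_general (J : ℝ → ℝ) (hJcont : Continuous J)
    (hJnonneg : ∀ x, 0 ≤ J x)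
    (l c d : ℝ) (hl : 0 < l) (hc : 0 < c) (hd : 0 < d)
    (U₀ : ℝ → ℝ) (hU₀cont : ContinuousOn U₀ (Set.Icc (-l) l))
    (hU₀nonneg : ∀ x ∈ Set.Icc (-l) l, 0 ≤ U₀ x) (hU₀l : U₀ l = 0)
    (ε : ℝ) (hε : 0 < ε) :
    ∃ V₀ : ℝ → ℝ, ContDiff ℝ 1 V₀ ∧
      (∀ x ∈ Set.Icc (-l) l, 0 ≤ V₀ x) ∧ V₀ l = 0 ∧
      deriv V₀ l = -(d / c) * ∫ y in Set.Icc (-l) l, J (l - y) * V₀ y ∧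
      ∀ x ∈ Set.Icc (-l) l, |U₀ x - V₀ x| ≤ ε := by
  obtain ⟨W, hW, hW₀, hWl, hW', hUW⟩ :=
    exists_contDiff_nonneg_flat_near (by linarith) hU₀cont hU₀nonneg hU₀l (half_pos hε)
  obtain ⟨V, hV, hV₀, hVl, hV', hWV⟩ := exists_near_satisfying_boundary_condition
    (K := fun y => J (l - y)) (k := d / c)
    (by fun_prop : Continuous fun y => J (l - y)).integrableOn_Icc
    (fun y _ => hJnonneg _) (by positivity) (half_pos hε) hW (fun x _ => hW₀ x) hWl hW'
  refine ⟨V, hV, hV₀, hVl, hV', fun x hx => ?_⟩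
  calc |U₀ x - V x| ≤ |U₀ x - W x| + |W x - V x| := abs_sub_le _ _ _
    _ ≤ ε / 2 + ε / 2 := add_le_add (hUW x hx) (hWV x hx)
    _ = ε := add_halves ε

/-- density of `V_l^c` in `U_l^c` (case `c > 0`): every nonnegative
continuous `U₀` on `[-l,l]` with `U₀(l) = 0` can be approximated within `ε` in sup norm
by a nonnegative `C¹` function `V₀` with `V₀(l) = 0` and
`V₀'(l) = -(d/c) ∫_{-l}^l J(l-y) V₀(y) dy`. -/
theorem stmt16 (J : ℝ → ℝ) (hJcont : Continuous J) (hJbdd : ∃ C, ∀ x, J x ≤ C)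
    (hJnonneg : ∀ x, 0 ≤ J x) (hJ0 : 0 < J 0) (hJL1 : Integrable J)
    (hJint : ∫ x, J x = 1)
    (l c d : ℝ) (hl : 0 < l) (hc : 0 < c) (hd : 0 < d)
    (U₀ : ℝ → ℝ) (hU₀cont : ContinuousOn U₀ (Set.Icc (-l) l))
    (hU₀nonneg : ∀ x ∈ Set.Icc (-l) l, 0 ≤ U₀ x) (hU₀l : U₀ l = 0)
    (ε : ℝ) (hε : 0 < ε) :
    ∃ V₀ : ℝ → ℝ, ContDiff ℝ 1 V₀ ∧
      (∀ x ∈ Set.Icc (-l) l, 0 ≤ V₀ x) ∧ V₀ l = 0 ∧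
      deriv V₀ l = -(d / c) * ∫ y in Set.Icc (-l) l, J (l - y) * V₀ y ∧
      ∀ x ∈ Set.Icc (-l) l, |U₀ x - V₀ x| ≤ ε :=
  stmt16_general J hJcont hJnonneg l c d hl hc hd U₀ hU₀cont hU₀nonneg hU₀l ε hε
end

section
/- Let J be continuous, nonnegative, bounded with ∫_ℝ J = 1 and J(0) > 0, let {J_n} be nondecreasing compactly supported continuous approximations with J_n ≤ J and J_n → J locally uniformly, and let ν_n minimize η_n(ν) = ∫_ℝ J_n(x) e^{-ν x} dx + c ν. Then the sequence {ν_n} is bounded. -/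
open MeasureTheory Real Filter Set

/-!
Since the `Jₙ` increase, they are all bounded below by some `σ > 0` on a fixed interval
`[-2δ, 2δ]` around `0`, so `ηₙ(ν) ≥ σ δ e^{δ|ν|} - |c| |ν|` uniformly in `n`. Minimality gives
`ηₙ(νₙ) ≤ ηₙ(0) = ∫ Jₙ ≤ ∫ J`, and an exponential in `|νₙ|` cannot stay below an affine
function of `|νₙ|`.
-/

lemma mul_mul_exp_le_integral_mul_exp_of_nonpos {f : ℝ → ℝ} {σ δ μ : ℝ} (hδ : 0 ≤ δ)
    (hμ : μ ≤ 0) (hf : Integrable fun x => f x * exp (-μ * x)) (hf0 : ∀ x, 0 ≤ f x)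
    (hσ : ∀ x ∈ Icc δ (2 * δ), σ ≤ f x) :
    σ * δ * exp (-μ * δ) ≤ ∫ x, f x * exp (-μ * x) := by
  have hpointwise : ∀ x ∈ Icc δ (2 * δ), σ * exp (-μ * δ) ≤ f x * exp (-μ * x) := by
    intro x hx
    have hexp : exp (-μ * δ) ≤ exp (-μ * x) := exp_le_exp.2 (by nlinarith [hx.1])
    exact mul_le_mul (hσ x hx) hexp (exp_pos _).le (hf0 x)
  have hvol : volume.real (Icc δ (2 * δ)) = δ := by
    rw [Real.volume_real_Icc_of_le (by linarith)]; ring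
  calc σ * δ * exp (-μ * δ) = σ * exp (-μ * δ) * volume.real (Icc δ (2 * δ)) := by
        rw [hvol]; ring
    _ ≤ ∫ x in Icc δ (2 * δ), f x * exp (-μ * x) :=
        setIntegral_ge_of_const_le_real measurableSet_Icc measure_Icc_lt_top.ne hpointwise
          hf.integrableOn
    _ ≤ ∫ x, f x * exp (-μ * x) :=
        setIntegral_le_integral hf (.of_forall fun x => mul_nonneg (hf0 x) (exp_pos _).le)

lemma mul_mul_exp_abs_le_integral_mul_exp {f : ℝ → ℝ} {σ δ : ℝ} (μ : ℝ) (hδ : 0 ≤ δ)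
    (hf : Integrable fun x => f x * exp (-μ * x)) (hf0 : ∀ x, 0 ≤ f x)
    (hσ : ∀ x, |x| ≤ 2 * δ → σ ≤ f x) :
    σ * δ * exp (δ * |μ|) ≤ ∫ x, f x * exp (-μ * x) := by
  rcases le_total μ 0 with hμ | hμ
  · calc σ * δ * exp (δ * |μ|) = σ * δ * exp (-μ * δ) := by rw [abs_of_nonpos hμ]; ring_nf
      _ ≤ ∫ x, f x * exp (-μ * x) :=
        mul_mul_exp_le_integral_mul_exp_of_nonpos hδ hμ hf hf0 fun x hx =>
          hσ x (by rw [abs_of_nonneg (hδ.trans hx.1)]; exact hx.2)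
  · have hreflect : (fun x => f (-x) * exp (-(-μ) * x)) = fun x => f (-x) * exp (-μ * -x) := by
      ext x; ring_nf
    calc σ * δ * exp (δ * |μ|) = σ * δ * exp (-(-μ) * δ) := by rw [abs_of_nonneg hμ]; ring_nf
      _ ≤ ∫ x, f (-x) * exp (-(-μ) * x) :=
        mul_mul_exp_le_integral_mul_exp_of_nonpos hδ (neg_nonpos.2 hμ)
          (hreflect ▸ hf.comp_neg) (fun x => hf0 (-x)) fun x hx =>
          hσ (-x) (by rw [abs_neg, abs_of_nonneg (hδ.trans hx.1)]; exact hx.2)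
      _ = ∫ x, f x * exp (-μ * x) := by
        rw [hreflect, integral_neg_eq_self (fun x => f x * exp (-μ * x))]

lemma exists_le_of_mul_exp_le_add_mul {a b : ℝ} (ha : 0 < a) (hb : 0 < b) (K L : ℝ) :
    ∃ C, ∀ t, 0 ≤ t → a * exp (b * t) ≤ K + L * t → t ≤ C := by
  refine ⟨max 1 (2 * (|K| + |L|) / (a * b ^ 2)), fun t ht h => ?_⟩
  have hquad : a * (b * t) ^ 2 / 2 ≤ a * exp (b * t) := by
    have hexp : (b * t) ^ 2 / 2 ≤ exp (b * t) := by
      linarith [quadratic_le_exp_of_nonneg (mul_nonneg hb.le ht), mul_nonneg hb.le ht]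
    linarith [mul_le_mul_of_nonneg_left hexp ha.le]
  rcases le_total t 1 with ht1 | ht1
  · exact le_max_of_le_left ht1
  · refine le_max_of_le_right ((le_div_iff₀ (by positivity)).2 ?_)
    nlinarith [le_abs_self K, le_abs_self L, abs_nonneg K, abs_nonneg L]

lemma exists_pos_forall_abs_le_lt_of_continuousAt {f : ℝ → ℝ} {a : ℝ} (hf : ContinuousAt f 0)
    (ha : a < f 0) : ∃ δ > 0, ∀ x, |x| ≤ δ → a < f x := by
  obtain ⟨δ, hδ, hball⟩ :=
    Metric.nhds_basis_closedBall.eventually_iff.1 (hf.eventually (lt_mem_nhds ha))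
  exact ⟨δ, hδ, fun x hx => hball (by rwa [mem_closedBall_zero_iff, Real.norm_eq_abs])⟩

theorem stmt17_general (J : ℝ → ℝ) (hJL1 : Integrable J) (c : ℝ)
    (Jn : ℕ → ℝ → ℝ)
    (hJncont : ∀ n, Continuous (Jn n)) (hJnsupp : ∀ n, HasCompactSupport (Jn n))
    (hJnnonneg : ∀ n x, 0 ≤ Jn n x) (hJn0 : ∀ n, 0 < Jn n 0)
    (hJnmono : ∀ n x, Jn n x ≤ Jn (n+1) x) (hJnle : ∀ n x, Jn n x ≤ J x)
    (ν : ℕ → ℝ)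
    (hmin : ∀ n, ∀ μ : ℝ,
      (∫ x, Jn n x * Real.exp (-(ν n) * x)) + c * ν n
        ≤ (∫ x, Jn n x * Real.exp (-μ * x)) + c * μ) :
    ∃ C : ℝ, ∀ n, |ν n| ≤ C := by
  obtain ⟨δ, hδ, hnear⟩ := exists_pos_forall_abs_le_lt_of_continuousAt
    (hJncont 0).continuousAt (half_lt_self (hJn0 0))
  have hlow : ∀ n x, |x| ≤ 2 * (δ / 2) → Jn 0 0 / 2 ≤ Jn n x := fun n x hx =>
    (hnear x (by linarith)).le.trans
      (monotone_nat_of_le_succ (fun k => hJnmono k x) (Nat.zero_le n))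
  have hbound : ∀ n, Jn 0 0 / 2 * (δ / 2) * exp (δ / 2 * |ν n|) ≤ (∫ x, J x) + |c| * |ν n| := by
    intro n
    have hη : (∫ x, Jn n x * exp (-ν n * x)) + c * ν n ≤ ∫ x, J x :=
      calc (∫ x, Jn n x * exp (-ν n * x)) + c * ν n
          ≤ (∫ x, Jn n x * exp (-0 * x)) + c * 0 := hmin n 0
        _ = ∫ x, Jn n x := by simp
        _ ≤ ∫ x, J x := integral_mono
            ((hJncont n).integrable_of_hasCompactSupport (hJnsupp n)) hJL1 (hJnle n)
    have hintegrable : Integrable fun x => Jn n x * exp (-ν n * x) :=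
      ((hJncont n).mul (by fun_prop)).integrable_of_hasCompactSupport (hJnsupp n).mul_right
    linarith [mul_mul_exp_abs_le_integral_mul_exp (ν n) (by positivity) hintegrable
      (hJnnonneg n) (hlow n), neg_abs_le (c * ν n), abs_mul c (ν n)]
  obtain ⟨C, hC⟩ := exists_le_of_mul_exp_le_add_mul
    (mul_pos (half_pos (hJn0 0)) (half_pos hδ)) (half_pos hδ) (∫ x, J x) |c|
  exact ⟨C, fun n => hC _ (abs_nonneg _) (hbound n)⟩

/-- with `Jₙ` a nondecreasing compactly supported approximating sequence of
`J` and `νₙ` a minimizer of `ηₙ(ν) = ∫ Jₙ(x) e^{-ν x} dx + c ν`, the sequence `{νₙ}` is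
bounded. -/
theorem stmt17 (J : ℝ → ℝ) (hJcont : Continuous J) (hJbdd : ∃ C, ∀ x, J x ≤ C)
    (hJnonneg : ∀ x, 0 ≤ J x) (hJ0 : 0 < J 0) (hJL1 : Integrable J)
    (hJint : ∫ x, J x = 1) (c : ℝ)
    (Jn : ℕ → ℝ → ℝ)
    (hJncont : ∀ n, Continuous (Jn n)) (hJnsupp : ∀ n, HasCompactSupport (Jn n))
    (hJnnonneg : ∀ n x, 0 ≤ Jn n x) (hJn0 : ∀ n, 0 < Jn n 0)
    (hJnmono : ∀ n x, Jn n x ≤ Jn (n+1) x) (hJnle : ∀ n x, Jn n x ≤ J x)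
    (hJnlim : TendstoLocallyUniformly (fun n => Jn n) J Filter.atTop)
    (ν : ℕ → ℝ)
    (hmin : ∀ n, ∀ μ : ℝ,
      (∫ x, Jn n x * Real.exp (-(ν n) * x)) + c * ν n
        ≤ (∫ x, Jn n x * Real.exp (-μ * x)) + c * μ) :
    ∃ C : ℝ, ∀ n, |ν n| ≤ C :=
  stmt17_general J hJL1 c Jn hJncont hJnsupp hJnnonneg hJn0 hJnmono hJnle ν hmin
end

section
/- Let J satisfy condition (J) and let {J_n} be a nondecreasing approximating sequence as above with minimizers ν_n of η_n(ν) = ∫ J_n(x)e^{-νx}dx + cν, ν_n → ν₀, and suppose η(ν) = ∫ J(x)e^{-νx}dx + cν. Then inf_{ν ∈ ℝ} η(ν) = η(ν₀), i.e. the infimum for J is attained at the limit of the minimizers for J_n, and η_n(ν_n) → η(ν₀). -/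
/-! The integrands `Jₙ(x) e^{-νₙ x}` are nonnegative and converge pointwise to `J(x) e^{-ν₀ x}`.
Comparing `ηₙ(νₙ) ≤ ηₙ(μ) ≤ η(μ)` bounds `∫ Jₙ e^{-νₙ x}` by `η(μ) - c νₙ`. At `μ = 0` this bound
and Fatou's lemma make `J e^{-ν₀ x}` integrable; at `μ = ν₀` the bound tends to `∫ J e^{-ν₀ x}`,
which Fatou's lemma also bounds from below, so the integrals converge. Letting `n → ∞` in
`ηₙ(νₙ) ≤ η(μ)` then shows that `ν₀` minimizes `η`. -/

open MeasureTheory Real Filter Set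

section Fatou

variable {α ι : Type*} [MeasurableSpace α] {μ : Measure α} {l : Filter ι}
  {F : ι → α → ℝ} {f : α → ℝ}

theorem ae_nonneg_of_tendsto [l.NeBot] (hF_nonneg : ∀ i, 0 ≤ F i)
    (hlim : ∀ᵐ x ∂μ, Tendsto (F · x) l (nhds (f x))) : 0 ≤ᵐ[μ] f :=
  hlim.mono fun x hx => ge_of_tendsto' hx fun i => hF_nonneg i x

variable [l.IsCountablyGenerated]

theorem lintegral_ofReal_le_liminf_ofReal_integral (hF_nonneg : ∀ i, 0 ≤ F i)
    (hF : ∀ i, Integrable (F i) μ) (hlim : ∀ᵐ x ∂μ, Tendsto (F · x) l (nhds (f x))) :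
    ∫⁻ x, ENNReal.ofReal (f x) ∂μ ≤ l.liminf fun i => ENNReal.ofReal (∫ x, F i x ∂μ) := by
  rcases l.eq_or_neBot with rfl | _
  · simp
  calc ∫⁻ x, ENNReal.ofReal (f x) ∂μ
      = ∫⁻ x, l.liminf (fun i => ENNReal.ofReal (F i x)) ∂μ := by
        refine lintegral_congr_ae (hlim.mono fun x hx => ?_)
        exact ((ENNReal.continuous_ofReal.tendsto _).comp hx).liminf_eq.symm
    _ ≤ l.liminf fun i => ∫⁻ x, ENNReal.ofReal (F i x) ∂μ :=
        lintegral_liminf_le' fun i => (hF i).aestronglyMeasurable.aemeasurable.ennreal_ofReal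
    _ = l.liminf fun i => ENNReal.ofReal (∫ x, F i x ∂μ) := by
        simp only [ofReal_integral_eq_lintegral_ofReal (hF _) (Eventually.of_forall (hF_nonneg _))]

theorem integrable_of_tendsto_of_integral_le [l.NeBot] (hF_nonneg : ∀ i, 0 ≤ F i)
    (hF : ∀ i, Integrable (F i) μ) (hf : AEStronglyMeasurable f μ)
    (hlim : ∀ᵐ x ∂μ, Tendsto (F · x) l (nhds (f x))) {b : ι → ℝ} {B : ℝ}
    (hb : Tendsto b l (nhds B)) (hFb : ∀ᶠ i in l, ∫ x, F i x ∂μ ≤ b i) :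
    Integrable f μ := by
  refine ⟨hf, (hasFiniteIntegral_iff_ofReal (ae_nonneg_of_tendsto hF_nonneg hlim)).2 ?_⟩
  calc ∫⁻ x, ENNReal.ofReal (f x) ∂μ
      ≤ l.liminf fun i => ENNReal.ofReal (∫ x, F i x ∂μ) :=
        lintegral_ofReal_le_liminf_ofReal_integral hF_nonneg hF hlim
    _ ≤ l.liminf fun i => ENNReal.ofReal (b i) :=
        liminf_le_liminf (hFb.mono fun i hi => ENNReal.ofReal_le_ofReal hi)
    _ = ENNReal.ofReal B := ((ENNReal.continuous_ofReal.tendsto B).comp hb).liminf_eq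
    _ < ⊤ := ENNReal.ofReal_lt_top

theorem eventually_lt_integral_of_tendsto (hF_nonneg : ∀ i, 0 ≤ F i)
    (hF : ∀ i, Integrable (F i) μ) (hf : Integrable f μ)
    (hlim : ∀ᵐ x ∂μ, Tendsto (F · x) l (nhds (f x))) {a : ℝ} (ha : a < ∫ x, f x ∂μ) :
    ∀ᶠ i in l, a < ∫ x, F i x ∂μ := by
  rcases l.eq_or_neBot with rfl | _
  · simp
  rcases lt_or_ge a 0 with ha0 | ha0
  · exact Eventually.of_forall fun i => ha0.trans_le (integral_nonneg (hF_nonneg i))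
  have : ENNReal.ofReal a < l.liminf fun i => ENNReal.ofReal (∫ x, F i x ∂μ) := by
    calc ENNReal.ofReal a < ENNReal.ofReal (∫ x, f x ∂μ) :=
          (ENNReal.ofReal_lt_ofReal_iff_of_nonneg ha0).2 ha
      _ = ∫⁻ x, ENNReal.ofReal (f x) ∂μ :=
          ofReal_integral_eq_lintegral_ofReal hf (ae_nonneg_of_tendsto hF_nonneg hlim)
      _ ≤ _ := lintegral_ofReal_le_liminf_ofReal_integral hF_nonneg hF hlim
  exact (eventually_lt_of_lt_liminf this).mono fun i hi =>
    (ENNReal.ofReal_lt_ofReal_iff_of_nonneg ha0).1 hi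

theorem tendsto_integral_of_tendsto_of_integral_le (hF_nonneg : ∀ i, 0 ≤ F i)
    (hF : ∀ i, Integrable (F i) μ) (hf : Integrable f μ)
    (hlim : ∀ᵐ x ∂μ, Tendsto (F · x) l (nhds (f x))) {b : ι → ℝ}
    (hb : Tendsto b l (nhds (∫ x, f x ∂μ))) (hFb : ∀ᶠ i in l, ∫ x, F i x ∂μ ≤ b i) :
    Tendsto (fun i => ∫ x, F i x ∂μ) l (nhds (∫ x, f x ∂μ)) :=
  tendsto_order.2 ⟨fun _ ha => eventually_lt_integral_of_tendsto hF_nonneg hF hf hlim ha,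
    fun a ha => (hFb.and ((tendsto_order.1 hb).2 a ha)).mono fun _ hi => hi.1.trans_lt hi.2⟩

end Fatou

theorem integral_mul_exp_le_of_minimizer {K J : ℝ → ℝ} {c ν μ : ℝ}
    (hKJ : ∀ x, K x ≤ J x) (hK : Integrable fun x => K x * exp (-μ * x))
    (hJ : Integrable fun x => J x * exp (-μ * x))
    (hmin : (∫ x, K x * exp (-ν * x)) + c * ν ≤ (∫ x, K x * exp (-μ * x)) + c * μ) :
    ∫ x, K x * exp (-ν * x) ≤ (∫ x, J x * exp (-μ * x)) + c * μ - c * ν := by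
  have : ∫ x, K x * exp (-μ * x) ≤ ∫ x, J x * exp (-μ * x) :=
    integral_mono hK hJ fun x => mul_le_mul_of_nonneg_right (hKJ x) (exp_pos _).le
  linarith

theorem stmt18_general (J : ℝ → ℝ) (hJL1 : Integrable J) (c : ℝ)
    (Jn : ℕ → ℝ → ℝ)
    (hJncont : ∀ n, Continuous (Jn n)) (hJnsupp : ∀ n, HasCompactSupport (Jn n))
    (hJnnonneg : ∀ n x, 0 ≤ Jn n x) (hJnle : ∀ n x, Jn n x ≤ J x)
    (hJnlim : TendstoLocallyUniformly (fun n => Jn n) J Filter.atTop)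
    (ν : ℕ → ℝ)
    (hmin : ∀ n, ∀ μ : ℝ,
      (∫ x, Jn n x * Real.exp (-(ν n) * x)) + c * ν n
        ≤ (∫ x, Jn n x * Real.exp (-μ * x)) + c * μ)
    (ν₀ : ℝ) (hνlim : Filter.Tendsto ν Filter.atTop (nhds ν₀)) :
    Integrable (fun x => J x * Real.exp (-ν₀ * x)) ∧
    (∀ μ : ℝ, Integrable (fun x => J x * Real.exp (-μ * x)) →
      (∫ x, J x * Real.exp (-ν₀ * x)) + c * ν₀
        ≤ (∫ x, J x * Real.exp (-μ * x)) + c * μ) ∧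
    Filter.Tendsto (fun n => (∫ x, Jn n x * Real.exp (-(ν n) * x)) + c * ν n)
      Filter.atTop (nhds ((∫ x, J x * Real.exp (-ν₀ * x)) + c * ν₀)) := by
  set F : ℕ → ℝ → ℝ := fun n x => Jn n x * exp (-(ν n) * x)
  have hF_nonneg : ∀ n, 0 ≤ F n := fun n x => mul_nonneg (hJnnonneg n x) (exp_pos _).le
  have hJn_exp : ∀ n μ, Integrable fun x => Jn n x * exp (-μ * x) := fun n μ =>
    ((hJncont n).mul (by fun_prop)).integrable_of_hasCompactSupport (hJnsupp n).mul_right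
  have hlim : ∀ x, Tendsto (F · x) atTop (nhds (J x * exp (-ν₀ * x))) := fun x =>
    ((hJnlim.tendstoLocallyUniformlyOn (s := univ)).tendsto_at (mem_univ x)).mul
      ((continuous_exp.tendsto _).comp (hνlim.neg.mul_const x))
  have hF_le : ∀ μ, Integrable (fun x => J x * exp (-μ * x)) → ∀ n,
      ∫ x, F n x ≤ (∫ x, J x * exp (-μ * x)) + c * μ - c * ν n := fun μ hμ n =>
    integral_mul_exp_le_of_minimizer (hJnle n) (hJn_exp n μ) hμ (hmin n μ)
  have hint : Integrable fun x => J x * exp (-ν₀ * x) :=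
    integrable_of_tendsto_of_integral_le hF_nonneg (fun n => hJn_exp n (ν n))
      (hJL1.aestronglyMeasurable.mul
        (by fun_prop : Continuous fun x => exp (-ν₀ * x)).aestronglyMeasurable)
      (ae_of_all _ hlim) (tendsto_const_nhds.sub (hνlim.const_mul c))
      (Eventually.of_forall (hF_le 0 (by simpa using hJL1)))
  have hbound :=
    (tendsto_const_nhds (x := (∫ x, J x * exp (-ν₀ * x)) + c * ν₀)).sub (hνlim.const_mul c)
  rw [add_sub_cancel_right] at hbound
  have hconv : Tendsto (fun n => ∫ x, F n x) atTop (nhds (∫ x, J x * exp (-ν₀ * x))) :=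
    tendsto_integral_of_tendsto_of_integral_le hF_nonneg (fun n => hJn_exp n (ν n)) hint
      (ae_of_all _ hlim) hbound (Eventually.of_forall (hF_le ν₀ hint))
  have hη := hconv.add (hνlim.const_mul c)
  exact ⟨hint, fun μ hμ => le_of_tendsto' hη fun n => by linarith [hF_le μ hμ n], hη⟩

/-- with `Jₙ ↑ J` as before, minimizers `νₙ` of
`ηₙ(ν) = ∫ Jₙ e^{-νx} dx + cν` converging to `ν₀`, the infimum of
`η(ν) = ∫ J e^{-νx} dx + cν` is attained at `ν₀` (in particular `J e^{-ν₀ ·}` is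
integrable, and `η(ν₀) ≤ η(μ)` for every `μ` at which the integral is finite), and
`ηₙ(νₙ) → η(ν₀)`. -/
theorem stmt18 (J : ℝ → ℝ) (hJcont : Continuous J) (hJbdd : ∃ C, ∀ x, J x ≤ C)
    (hJnonneg : ∀ x, 0 ≤ J x) (hJ0 : 0 < J 0) (hJL1 : Integrable J)
    (hJint : ∫ x, J x = 1) (c : ℝ)
    (Jn : ℕ → ℝ → ℝ)
    (hJncont : ∀ n, Continuous (Jn n)) (hJnsupp : ∀ n, HasCompactSupport (Jn n))
    (hJnnonneg : ∀ n x, 0 ≤ Jn n x) (hJn0 : ∀ n, 0 < Jn n 0)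
    (hJnmono : ∀ n x, Jn n x ≤ Jn (n+1) x) (hJnle : ∀ n x, Jn n x ≤ J x)
    (hJnlim : TendstoLocallyUniformly (fun n => Jn n) J Filter.atTop)
    (ν : ℕ → ℝ)
    (hmin : ∀ n, ∀ μ : ℝ,
      (∫ x, Jn n x * Real.exp (-(ν n) * x)) + c * ν n
        ≤ (∫ x, Jn n x * Real.exp (-μ * x)) + c * μ)
    (ν₀ : ℝ) (hνlim : Filter.Tendsto ν Filter.atTop (nhds ν₀)) :
    Integrable (fun x => J x * Real.exp (-ν₀ * x)) ∧
    (∀ μ : ℝ, Integrable (fun x => J x * Real.exp (-μ * x)) →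
      (∫ x, J x * Real.exp (-ν₀ * x)) + c * ν₀
        ≤ (∫ x, J x * Real.exp (-μ * x)) + c * μ) ∧
    Filter.Tendsto (fun n => (∫ x, Jn n x * Real.exp (-(ν n) * x)) + c * ν n)
      Filter.atTop (nhds ((∫ x, J x * Real.exp (-ν₀ * x)) + c * ν₀)) :=
  stmt18_general J hJL1 c Jn hJncont hJnsupp hJnnonneg hJnle hJnlim ν hmin ν₀ hνlim
end

section
/- Let J satisfy condition (J) and suppose there is a nondecreasing compactly supported approximating sequence J_n ↑ J (locally uniformly, J_n ≤ J, J_n(0) > 0) with ∫_ℝ J_n(x) x dx → 0. Then inf_{ν ∈ ℝ} ∫_ℝ J(x) e^{-ν x} dx = 1, attained at ν = 0. -/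
open MeasureTheory Real Filter Set

/-- if `J` satisfies (J) and admits a nondecreasing compactly supported
approximating sequence `Jₙ ↑ J` with `∫ Jₙ(x) x dx → 0`, then
`inf_ν ∫ J(x) e^{-ν x} dx = 1`, attained at `ν = 0`: the value at `ν = 0` is `1` and
`∫ J(x) e^{-ν x} dx ≥ 1` for every `ν` at which the integral is finite (it is `+∞`
otherwise). -/
theorem stmt19 (J : ℝ → ℝ) (hJcont : Continuous J) (hJbdd : ∃ C, ∀ x, J x ≤ C)
    (hJnonneg : ∀ x, 0 ≤ J x) (hJ0 : 0 < J 0) (hJL1 : Integrable J)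
    (hJint : ∫ x, J x = 1)
    (Jn : ℕ → ℝ → ℝ)
    (hJncont : ∀ n, Continuous (Jn n)) (hJnsupp : ∀ n, HasCompactSupport (Jn n))
    (hJnnonneg : ∀ n x, 0 ≤ Jn n x) (hJn0 : ∀ n, 0 < Jn n 0)
    (hJnmono : ∀ n x, Jn n x ≤ Jn (n+1) x) (hJnle : ∀ n x, Jn n x ≤ J x)
    (hJnlim : TendstoLocallyUniformly (fun n => Jn n) J Filter.atTop)
    (hmoment : Filter.Tendsto (fun n => ∫ x, Jn n x * x) Filter.atTop (nhds 0)) :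
    ((∫ x, J x * Real.exp (-(0:ℝ) * x)) = 1) ∧
    (∀ ν : ℝ, Integrable (fun x => J x * Real.exp (-ν * x)) →
      (1:ℝ) ≤ ∫ x, J x * Real.exp (-ν * x)) := by
  constructor
  · simpa using hJint
  · intro ν hInt
    have hJnInt : ∀ n, Integrable (Jn n) := fun n =>
      (hJncont n).integrable_of_hasCompactSupport (hJnsupp n)
    have hJnIntE : ∀ n, Integrable (fun x => Jn n x * Real.exp (-ν * x)) := fun n =>
      ((hJncont n).mul (by continuity)).integrable_of_hasCompactSupport
        ((hJnsupp n).mul_right)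
    have hJnIntx : ∀ n, Integrable (fun x => Jn n x * x) := fun n =>
      ((hJncont n).mul continuous_id).integrable_of_hasCompactSupport
        ((hJnsupp n).mul_right)
    -- key inequality for each n
    have key : ∀ n, (∫ x, Jn n x) - ν * ∫ x, Jn n x * x ≤ ∫ x, J x * Real.exp (-ν * x) := by
      intro n
      have h1 : ∫ x, Jn n x * Real.exp (-ν * x) ≤ ∫ x, J x * Real.exp (-ν * x) :=
        integral_mono (hJnIntE n) hInt
          (fun x => mul_le_mul_of_nonneg_right (hJnle n x) (Real.exp_pos _).le)
      have h2 : ∫ x, (Jn n x - ν * (Jn n x * x)) ≤ ∫ x, Jn n x * Real.exp (-ν * x) := by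
        apply integral_mono ((hJnInt n).sub ((hJnIntx n).const_mul ν)) (hJnIntE n)
        intro x
        simp only [Pi.sub_apply]
        have he : 1 + (-ν * x) ≤ Real.exp (-ν * x) := by
          linarith [Real.add_one_le_exp (-ν * x)]
        nlinarith [mul_le_mul_of_nonneg_left he (hJnnonneg n x)]
      have h3 : ∫ x, (Jn n x - ν * (Jn n x * x)) = (∫ x, Jn n x) - ν * ∫ x, Jn n x * x := by
        rw [integral_sub (hJnInt n) ((hJnIntx n).const_mul ν), integral_const_mul]
      linarith [h3 ▸ h2]
    -- ∫ Jn → ∫ J = 1 by monotone convergence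
    have hmonox : ∀ x, Monotone fun n => Jn n x := fun x =>
      monotone_nat_of_le_succ (fun n => hJnmono n x)
    have hptwise : ∀ x, Tendsto (fun n => Jn n x) atTop (nhds (J x)) := fun x =>
      (hJnlim.tendstoLocallyUniformlyOn.tendsto_at (Set.mem_univ x))
    have hIntTend : Tendsto (fun n => ∫ x, Jn n x) atTop (nhds 1) := by
      have := integral_tendsto_of_tendsto_of_monotone hJnInt hJL1
        (Eventually.of_forall hmonox) (Eventually.of_forall hptwise)
      rwa [hJint] at this
    have hTend : Tendsto (fun n => (∫ x, Jn n x) - ν * ∫ x, Jn n x * x) atTop (nhds 1) := by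
      have := hIntTend.sub ((hmoment.const_mul ν))
      simpa using this
    exact le_of_tendsto hTend (Eventually.of_forall key)
end
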